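/- Let γ ∈ (0,1), R a finite set of reals, and M = {γⁿ·r | n ∈ ℕ, r ∈ R} ∪ {0}. Let f : ℝ → ℝ be any function with f(0) = 0 and f(h) ∈ M for all h. Then f has no nonzero derivative at 0; i.e., if f is differentiable at 0 then f'(0) = 0. -/

import Mathlib

/-!
Enlarge `M` to the set `S` of all `γ ^ z * r` with `z ∈ ℤ`, together with `0`. This set is
countable, closed (on a logarithmic scale each ray `r • γ ^ ℤ` is a lattice, accumulating only
at `0`) and invariant under division by `γ`. Hence the difference quotients
`f (γ ^ k * h) / γ ^ k`, which tend to `f' 0 * h`, all lie in `S`, so `f' 0 * h ∈ S` for every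
`h`. A countable set cannot contain a whole line `f' 0 • ℝ`, so `f' 0 = 0`.
-/

open Filter Set Topology
open scoped Pointwise

section

variable {γ : ℝ}

theorem isClosed_insert_zero_range_zpow (hγ : 0 < γ) :
    IsClosed (insert 0 (range (γ ^ · : ℤ → ℝ))) := by
  refine isClosed_of_closure_subset fun x hx => ?_
  rw [insert_eq, closure_union, closure_singleton] at hx
  rcases hx with rfl | hx
  · exact mem_insert _ _
  have hx0 : 0 ≤ x :=
    closure_minimal (range_subset_iff.2 fun z => (zpow_pos hγ z).le) isClosed_Ici hx
  rcases hx0.eq_or_lt with rfl | hx0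
  · exact mem_insert _ _
  have hlog : Real.log '' range (γ ^ · : ℤ → ℝ) = range fun z : ℤ => Real.log γ * z := by
    simp only [← range_comp, Function.comp_def, Real.log_zpow, mul_comm]
  have hlog_closed : IsClosed (range fun z : ℤ => Real.log γ * z) :=
    ((isClosedMap_smul₀ (Real.log γ)).comp
      Int.isClosedEmbedding_coe_real.isClosedMap).isClosed_range
  have hlogx : Real.log x ∈ closure (Real.log '' range (γ ^ · : ℤ → ℝ)) :=
    mem_closure_image (Real.continuousAt_log hx0.ne') hx
  rw [hlog, hlog_closed.closure_eq] at hlogx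
  obtain ⟨z, hz⟩ := hlogx
  refine mem_insert_of_mem _ ⟨z, ?_⟩
  rw [← Real.exp_log hx0, ← hz, ← Real.rpow_def_of_pos hγ, Real.rpow_intCast]

theorem div_mem_insert_zero_range_zpow (hγ : γ ≠ 0) {x : ℝ}
    (hx : x ∈ insert 0 (range (γ ^ · : ℤ → ℝ))) : x / γ ∈ insert 0 (range (γ ^ · : ℤ → ℝ)) := by
  rcases hx with rfl | ⟨z, rfl⟩
  · simp
  · exact mem_insert_of_mem _ ⟨z - 1, by simp [zpow_sub_one₀ hγ, div_eq_mul_inv]⟩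

/-- The inner `0` keeps each ray `r • γ ^ ℤ` closed, so that the finite union is closed. -/
def zpowSmulSet (γ : ℝ) (R : Finset ℝ) : Set ℝ :=
  insert 0 (⋃ r ∈ R, r • insert 0 (range (γ ^ · : ℤ → ℝ)))

variable {R : Finset ℝ}

theorem isClosed_zpowSmulSet (hγ : 0 < γ) : IsClosed (zpowSmulSet γ R) := by
  rw [zpowSmulSet, insert_eq]
  exact isClosed_singleton.union <| R.finite_toSet.isClosed_biUnion fun r _ =>
    (isClosed_insert_zero_range_zpow hγ).smul₀ r

theorem countable_zpowSmulSet : (zpowSmulSet γ R).Countable :=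
  ((R.countable_toSet.biUnion fun r _ =>
    ((countable_range _).insert 0).image (r • ·))).insert 0

theorem div_mem_zpowSmulSet (hγ : γ ≠ 0) {x : ℝ} (hx : x ∈ zpowSmulSet γ R) :
    x / γ ∈ zpowSmulSet γ R := by
  rcases hx with rfl | hx
  · simp [zpowSmulSet]
  obtain ⟨r, hr, t, ht, rfl⟩ := mem_iUnion₂.1 hx
  refine mem_insert_of_mem _ <| mem_iUnion₂.2
    ⟨r, hr, t / γ, div_mem_insert_zero_range_zpow hγ ht, ?_⟩
  simp only [smul_eq_mul, mul_div_assoc]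

theorem pow_mul_mem_zpowSmulSet (n : ℕ) {r : ℝ} (hr : r ∈ R) : γ ^ n * r ∈ zpowSmulSet γ R :=
  mem_insert_of_mem _ <| mem_iUnion₂.2
    ⟨r, hr, γ ^ n, mem_insert_of_mem _ ⟨n, zpow_natCast γ n⟩, mul_comm r _⟩

end

theorem div_pow_mem_of_div_mem {S : Set ℝ} {γ : ℝ} (hS : ∀ x ∈ S, x / γ ∈ S) {x : ℝ} (hx : x ∈ S)
    (k : ℕ) : x / γ ^ k ∈ S := by
  induction k with
  | zero => simpa using hx
  | succ k ih => simpa [pow_succ, div_div] using hS _ ih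

theorem mul_mem_of_hasDerivAt {S : Set ℝ} {γ : ℝ} (hS : IsClosed S) (hγ : γ ∈ Ioo (0 : ℝ) 1)
    (hSγ : ∀ x ∈ S, x / γ ∈ S) {f : ℝ → ℝ} (hf : ∀ x, f x ∈ S) (hf0 : f 0 = 0) {l : ℝ}
    (hl : HasDerivAt f l 0) (h : ℝ) : l * h ∈ S := by
  have hlh : HasDerivAt (fun t => f (t * h)) (l * h) 0 :=
    hl.comp_of_eq 0 (hasDerivAt_mul_const h) (zero_mul h).symm
  have hslope : Tendsto (fun t => f (t * h) / t) (𝓝[≠] 0) (𝓝 (l * h)) := by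
    simpa [hf0, div_eq_inv_mul] using hlh.tendsto_slope_zero
  have hpow : Tendsto (γ ^ · : ℕ → ℝ) atTop (𝓝[≠] 0) :=
    tendsto_nhdsWithin_of_tendsto_nhds_of_eventually_within _
      (tendsto_pow_atTop_nhds_zero_of_lt_one hγ.1.le hγ.2)
      (Eventually.of_forall fun k => (pow_pos hγ.1 k).ne')
  exact hS.mem_of_tendsto (hslope.comp hpow)
    (Eventually.of_forall fun k => div_pow_mem_of_div_mem hSγ (hf _) k)

theorem eq_zero_of_forall_mul_mem {S : Set ℝ} (hS : S.Countable) {l : ℝ} (hl : ∀ x, l * x ∈ S) :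
    l = 0 := by
  by_contra hl0
  exact Cardinal.not_countable_real <|
    (hS.preimage (mul_right_injective₀ hl0)).mono fun x _ => hl x

theorem no_nonzero_deriv (γ : ℝ) (hγ : γ ∈ Set.Ioo (0:ℝ) 1) (R : Finset ℝ)
    (M : Set ℝ) (hM : M = {x : ℝ | ∃ n : ℕ, ∃ r ∈ R, x = γ ^ n * r} ∪ {0})
    (f : ℝ → ℝ) (hf0 : f 0 = 0) (hf : ∀ h : ℝ, f h ∈ M)
    (l : ℝ) (hl : HasDerivAt f l 0) : l = 0 := by
  subst hM
  have hfS : ∀ h, f h ∈ zpowSmulSet γ R := by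
    intro h
    rcases hf h with ⟨n, r, hr, hfh⟩ | hfh
    · exact hfh ▸ pow_mul_mem_zpowSmulSet n hr
    · exact hfh ▸ mem_insert 0 _
  exact eq_zero_of_forall_mul_mem countable_zpowSmulSet <|
    mul_mem_of_hasDerivAt (isClosed_zpowSmulSet hγ.1) hγ
      (fun _ => div_mem_zpowSmulSet hγ.1.ne') hfS hf0 hl
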